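/- arXiv:0712.2091 — 2 statements merged into one kernel-verified Lean document; each statement's English description precedes it below -/
import Mathlib

section
/- Let λ ∈ (0,1) and d ≥ 2. The sequence v(k) = λ^((d^k-1)/(d-1)) is the unique fixed point, among sequences w with w(0) = 1, 1 ≥ w(1) ≥ w(2) ≥ ⋯ ≥ 0 and w summable, of the stationarity equations λ(w(k-1)^d − w(k)^d) = w(k) − w(k+1) for all k ≥ 1, together with w(1) = λ. -/
open Finset

/-! Given `w (k + 1) = λ w(k)^d`, the stationarity equation at `k + 1` is equivalent to the
same identity one step later. Starting from the normalization `w 1 = λ`, the equations thus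
reduce to the recursion `w (k + 1) = λ w(k)^d` from `w 0 = 1`, whose solution is
`λ^(1 + d + ⋯ + d^(k-1))`. -/

theorem succ_eq_mul_pow_of_stationary {R : Type*} [CommRing R] {lam : R} {d : ℕ}
    {w : ℕ → R} (h1 : w 1 = lam * w 0 ^ d)
    (hfix : ∀ k, lam * (w k ^ d - w (k + 1) ^ d) = w (k + 1) - w (k + 2)) (k : ℕ) :
    w (k + 1) = lam * w k ^ d := by
  induction k with
  | zero => exact h1
  | succ k ih => linear_combination hfix k + ih

theorem eq_pow_geom_sum_of_succ_eq_mul_pow {M : Type*} [CommMonoid M] {lam : M} {d : ℕ}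
    {w : ℕ → M} (h0 : w 0 = 1) (hsucc : ∀ k, w (k + 1) = lam * w k ^ d) (k : ℕ) :
    w k = lam ^ ∑ i ∈ range k, d ^ i := by
  induction k with
  | zero => simp [h0]
  | succ k ih => rw [hsucc, ih, ← pow_mul, ← pow_succ', geom_sum_succ, mul_comm]

theorem stmt_1_general (lam : ℝ) (d : ℕ)
    (w : ℕ → ℝ) (hw0 : w 0 = 1) (hw1 : w 1 = lam)
    (hfix : ∀ k : ℕ, 1 ≤ k → lam * (w (k - 1) ^ d - w k ^ d) = w k - w (k + 1)) :
    ∀ k, w k = lam ^ (∑ i ∈ Finset.range k, (d : ℝ) ^ i) := by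
  have hsucc : ∀ k, w (k + 1) = lam * w k ^ d :=
    succ_eq_mul_pow_of_stationary (by rw [hw0, hw1, one_pow, mul_one])
      fun k => by simpa using hfix (k + 1) k.succ_pos
  intro k
  exact_mod_cast eq_pow_geom_sum_of_succ_eq_mul_pow hw0 hsucc k

/-- Among nonincreasing summable sequences `w` with `w 0 = 1`, values in `[0,1]`,
and `w 1 = λ`, the sequence `v k = λ^((d^k-1)/(d-1))` is the unique solution of the
stationarity equations `λ (w(k-1)^d − w(k)^d) = w(k) − w(k+1)` for `k ≥ 1`. -/
theorem stmt_1 (lam : ℝ) (hlam0 : 0 < lam) (hlam1 : lam < 1) (d : ℕ) (hd : 2 ≤ d)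
    (w : ℕ → ℝ) (hw0 : w 0 = 1) (hmono : Antitone w) (hnonneg : ∀ k, 0 ≤ w k)
    (hsum : Summable w) (hw1 : w 1 = lam)
    (hfix : ∀ k : ℕ, 1 ≤ k → lam * (w (k - 1) ^ d - w k ^ d) = w k - w (k + 1)) :
    ∀ k, w k = lam ^ (∑ i ∈ Finset.range k, (d : ℝ) ^ i) :=
  stmt_1_general lam d w hw0 hw1 hfix
end

section
/- Let Z₁, …, Zₙ be independent real random variables, each with variance at most σⱼ² and range (essential supremum minus essential infimum) at most b, and let f : ℝⁿ → ℝ be 1-Lipschitz with respect to the ℓ¹ norm. Set v = Σⱼ σⱼ². Then for every u > 0, P(|f(Z₁,…,Zₙ) − E f(Z₁,…,Zₙ)| ≥ u) ≤ 2 exp(−u²/(2v + (2/3) b u)). -/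
open MeasureTheory ProbabilityTheory Real
open scoped Nat

/-!
Pushing `P` forward along `Z` reduces everything to the product measure `⊗ⱼ Law(Zⱼ)` on `ℝⁿ`,
where the moment generating function of `f - 𝔼 f` is bounded by induction on `n`. Integrating out
the first coordinate splits `f - 𝔼 f` into `f - g` and `g - 𝔼 g`, where `g y = ∫ f (x, y) dν(x)`
is again `ℓ¹`-1-Lipschitz in the remaining variables. For fixed `y` the slice `x ↦ f (x, y)` is
1-Lipschitz, so it exceeds its mean by at most `b` and its variance is at most that of `ν`; with
`eʸ ≤ 1 + y + y² / (2 (1 - c/3))` for `y ≤ c < 3` this gives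
`𝔼 exp (t (f - 𝔼 f)) ≤ exp (t² v / (2 (1 - t b / 3)))`. A Chernoff bound with
`t = u / (v + b u / 3)` and the same bound for `-f` finish the proof.
-/

lemma exp_le_one_add_add_sq_div_two_of_nonpos {y : ℝ} (hy : y ≤ 0) :
    exp y ≤ 1 + y + y ^ 2 / 2 := by
  have hq := quadratic_le_exp_of_nonneg (neg_nonneg.2 hy)
  have hprod : exp y * exp (-y) = 1 := by rw [← exp_add, add_neg_cancel, exp_zero]
  nlinarith [exp_pos y, sq_nonneg (y ^ 2)]

lemma exp_le_one_add_add_sq_div_of_le {c y : ℝ} (hc : 0 ≤ c) (hc3 : c < 3) (hy : y ≤ c) :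
    exp y ≤ 1 + y + y ^ 2 / (2 * (1 - c / 3)) := by
  rcases le_or_gt y 0 with hy0 | hy0
  · calc exp y ≤ 1 + y + y ^ 2 / 2 := exp_le_one_add_add_sq_div_two_of_nonpos hy0
      _ ≤ 1 + y + y ^ 2 / (2 * (1 - c / 3)) := by gcongr <;> linarith
  have htail : HasSum (fun k => y ^ (k + 2) / (k + 2)!) (exp y - (1 + y)) := by
    have := (hasSum_nat_add_iff' 2).2 (exp_eq_exp_ℝ ▸ NormedSpace.expSeries_div_hasSum_exp y)
    simpa [Finset.sum_range_succ] using this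
  have hgeom : HasSum (fun k : ℕ => y ^ 2 / 2 * (c / 3) ^ k) (y ^ 2 / 2 * (1 - c / 3)⁻¹) :=
    (hasSum_geometric_of_lt_one (by positivity) (by linarith)).mul_left _
  have hterm (k : ℕ) : y ^ (k + 2) / (k + 2)! ≤ y ^ 2 / 2 * (c / 3) ^ k := by
    have hfact : (2 * 3 ^ k : ℝ) ≤ (k + 2)! := by
      rw [add_comm k]; exact_mod_cast Nat.factorial_mul_pow_le_factorial (m := 2) (n := k)
    calc y ^ (k + 2) / (k + 2)! ≤ y ^ 2 * c ^ k / (2 * 3 ^ k) := by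
          rw [pow_add, mul_comm]; gcongr
      _ = y ^ 2 / 2 * (c / 3) ^ k := by rw [div_pow]; ring
  have := hasSum_le hterm htail hgeom
  rw [← div_div, div_eq_mul_inv _ (1 - c / 3)]
  linarith

lemma Continuous.memLp_of_ae_mem_isCompact {α E : Type*} [TopologicalSpace α]
    [MeasurableSpace α] [OpensMeasurableSpace α] [SecondCountableTopology α]
    [NormedAddCommGroup E] {μ : Measure α} [IsFiniteMeasure μ] {g : α → E} (hg : Continuous g)
    {K : Set α} (hK : IsCompact K) (hμK : ∀ᵐ x ∂μ, x ∈ K) (p : ENNReal) : MemLp g p μ := by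
  obtain ⟨C, hC⟩ := hK.exists_bound_of_continuousOn hg.continuousOn
  exact MemLp.of_bound hg.aestronglyMeasurable C (hμK.mono hC)

section Moments

variable {Ω : Type*} {mΩ : MeasurableSpace Ω} {μ : Measure Ω} [IsProbabilityMeasure μ]

lemma variance_comp_le_of_lipschitzWith_one {X : Ω → ℝ} (hX : MemLp X 2 μ) {h : ℝ → ℝ}
    (hh : LipschitzWith 1 h) : variance (fun ω => h (X ω)) μ ≤ variance X μ := by
  have hhX : AEStronglyMeasurable (fun ω => h (X ω)) μ :=
    hh.continuous.comp_aestronglyMeasurable hX.1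
  calc variance (fun ω => h (X ω)) μ = variance (fun ω => h (X ω) - h μ[X]) μ :=
        (variance_sub_const hhX _).symm
    _ ≤ μ[fun ω => (h (X ω) - h μ[X]) ^ 2] :=
        variance_le_expectation_sq (hhX.sub aestronglyMeasurable_const)
    _ ≤ μ[fun ω => (X ω - μ[X]) ^ 2] := by
        refine integral_mono_of_nonneg (ae_of_all _ fun ω => sq_nonneg _)
          (hX.sub (memLp_const _)).integrable_sq (ae_of_all _ fun ω => ?_)
        have hdist := hh.dist_le_mul (X ω) μ[X]
        rw [NNReal.coe_one, one_mul, Real.dist_eq, Real.dist_eq] at hdist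
        exact sq_le_sq.2 hdist
    _ = variance X μ := (variance_eq_integral hX.aemeasurable).symm

lemma ae_sub_integral_le {X : Ω → ℝ} (hX : Integrable X μ) {b : ℝ}
    (h : ∀ᵐ ω ∂μ, ∀ᵐ ω' ∂μ, X ω - X ω' ≤ b) : ∀ᵐ ω ∂μ, X ω - μ[X] ≤ b := by
  filter_upwards [h] with ω hω
  calc X ω - μ[X] = ∫ ω', (X ω - X ω') ∂μ := by
        rw [integral_sub (integrable_const _) hX, integral_const, probReal_univ, one_smul]
    _ ≤ ∫ _, b ∂μ := integral_mono_ae ((integrable_const _).sub hX) (integrable_const _) hω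
    _ = b := by simp

lemma mgf_sub_integral_le {X : Ω → ℝ} (hX : MemLp X 2 μ) {b t : ℝ} (hb : 0 ≤ b)
    (hXb : ∀ᵐ ω ∂μ, X ω - μ[X] ≤ b) (ht : 0 ≤ t) (htb : t * b < 3) :
    mgf (fun ω => X ω - μ[X]) μ t ≤ exp (t ^ 2 * variance X μ / (2 * (1 - t * b / 3))) := by
  set K := t ^ 2 / (2 * (1 - t * b / 3))
  have hY : MemLp (fun ω => X ω - μ[X]) 2 μ := hX.sub (memLp_const _)
  have hquad : ∀ᵐ ω ∂μ,
      exp (t * (X ω - μ[X])) ≤ 1 + t * (X ω - μ[X]) + K * (X ω - μ[X]) ^ 2 := by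
    filter_upwards [hXb] with ω hω
    convert exp_le_one_add_add_sq_div_of_le (mul_nonneg ht hb) htb
      (mul_le_mul_of_nonneg_left hω ht) using 2
    ring
  have hlin : Integrable (fun ω => 1 + t * (X ω - μ[X])) μ :=
    (integrable_const _).add ((hY.integrable one_le_two).const_mul t)
  calc mgf (fun ω => X ω - μ[X]) μ t
      ≤ ∫ ω, (1 + t * (X ω - μ[X]) + K * (X ω - μ[X]) ^ 2) ∂μ :=
        integral_mono_ae (integrable_exp_mul_of_le t b ht hY.aemeasurable hXb)
          (hlin.add (hY.integrable_sq.const_mul K)) hquad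
    _ = 1 + K * variance X μ := by
        rw [integral_add hlin (hY.integrable_sq.const_mul K), integral_add (integrable_const _)
          ((hY.integrable one_le_two).const_mul t), integral_const_mul, integral_const_mul,
          integral_sub (hX.integrable one_le_two) (integrable_const _),
          variance_eq_integral hX.aemeasurable]
        simp
    _ ≤ exp (t ^ 2 * variance X μ / (2 * (1 - t * b / 3))) := by
        rw [mul_div_right_comm]; linarith [add_one_le_exp (K * variance X μ)]

end Moments

lemma mgf_sub_integral_le_of_lipschitzWith {ν : Measure ℝ} [IsProbabilityMeasure ν] {a b : ℝ}
    (hν : ∀ᵐ x ∂ν, x ∈ Set.Icc a (a + b)) {h : ℝ → ℝ} (hh : LipschitzWith 1 h) {t : ℝ}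
    (ht : 0 ≤ t) (htb : t * b < 3) :
    mgf (fun x => h x - ∫ x', h x' ∂ν) ν t ≤
      exp (t ^ 2 * variance id ν / (2 * (1 - t * b / 3))) := by
  have hb : 0 ≤ b := by obtain ⟨x, hx⟩ := hν.exists; linarith [hx.1, hx.2]
  have hD : 0 < 2 * (1 - t * b / 3) := by nlinarith
  have hh2 : MemLp h 2 ν := hh.continuous.memLp_of_ae_mem_isCompact isCompact_Icc hν 2
  have hosc : ∀ᵐ x ∂ν, h x - ∫ x', h x' ∂ν ≤ b := by
    refine ae_sub_integral_le (hh2.integrable one_le_two) ?_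
    filter_upwards [hν] with x hx
    filter_upwards [hν] with x' hx'
    have hdist := hh.dist_le_mul x x'
    rw [NNReal.coe_one, one_mul, Real.dist_eq, Real.dist_eq] at hdist
    have hxx' : |x - x'| ≤ b :=
      abs_sub_le_iff.2 ⟨by linarith [hx.2, hx'.1], by linarith [hx.1, hx'.2]⟩
    linarith [le_abs_self (h x - h x')]
  calc _ ≤ exp (t ^ 2 * variance h ν / (2 * (1 - t * b / 3))) :=
        mgf_sub_integral_le hh2 hb hosc ht htb
    _ ≤ _ := by
        gcongr
        exact variance_comp_le_of_lipschitzWith_one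
          (memLp_of_bounded hν aestronglyMeasurable_id 2) hh

lemma continuous_of_abs_sub_le_sum {ι : Type*} [Fintype ι] {f : (ι → ℝ) → ℝ}
    (hf : ∀ x y, |f x - f y| ≤ ∑ j, |x j - y j|) : Continuous f := by
  refine (LipschitzWith.of_dist_le_mul (K := Fintype.card ι) fun x y => ?_).continuous
  calc dist (f x) (f y) ≤ ∑ j, dist (x j) (y j) := hf x y
    _ ≤ ∑ _j : ι, dist x y := Finset.sum_le_sum fun j _ => dist_le_pi_dist x y j
    _ = Fintype.card ι * dist x y := by simp

lemma ae_pi_mem_univ_pi {ι : Type*} [Fintype ι] {α : ι → Type*} [∀ i, MeasurableSpace (α i)]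
    {μ : ∀ i, Measure (α i)} [∀ i, SigmaFinite (μ i)] {s : ∀ i, Set (α i)}
    (h : ∀ i, ∀ᵐ x ∂μ i, x ∈ s i) : ∀ᵐ x ∂Measure.pi μ, x ∈ Set.univ.pi s := by
  filter_upwards [ae_all_iff.2 fun i => Measure.tendsto_eval_ae_ae.eventually (h i)]
    with x hx i _ using hx i

lemma Continuous.integrable_pi_of_ae_mem_Icc {ι : Type*} [Fintype ι] {μ : ι → Measure ℝ}
    [∀ j, IsFiniteMeasure (μ j)] {a : ι → ℝ} {b : ℝ}
    (hμ : ∀ j, ∀ᵐ x ∂μ j, x ∈ Set.Icc (a j) (a j + b)) {g : (ι → ℝ) → ℝ} (hg : Continuous g) :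
    Integrable g (Measure.pi μ) :=
  (hg.memLp_of_ae_mem_isCompact (isCompact_univ_pi fun _ => isCompact_Icc)
    (ae_pi_mem_univ_pi hμ) 1).integrable le_rfl

lemma integral_pi_fin_succ {n : ℕ} {α : Type*} [MeasurableSpace α]
    (μ : Fin (n + 1) → Measure α) [∀ i, SigmaFinite (μ i)] {F : (Fin (n + 1) → α) → ℝ}
    (hF : Integrable F (Measure.pi μ)) :
    ∫ x, F x ∂Measure.pi μ = ∫ y, ∫ x, F (Fin.cons x y) ∂μ 0 ∂Measure.pi fun j => μ j.succ := by
  have he := (measurePreserving_piFinSuccAbove μ 0).symm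
  have hcons (p : α × (Fin n → α)) :
      (MeasurableEquiv.piFinSuccAbove (fun _ => α) 0).symm p = Fin.cons p.1 p.2 := by
    simp [MeasurableEquiv.piFinSuccAbove_symm_apply, Fin.insertNthEquiv, Fin.insertNth_zero']
  rw [← he.integral_comp', integral_prod_symm]
  · simp only [hcons]; rfl
  · exact he.integrable_comp_emb (MeasurableEquiv.measurableEmbedding _) |>.2 hF

section Slices

variable {n : ℕ} {f : (Fin (n + 1) → ℝ) → ℝ}

lemma lipschitzWith_one_cons_left (hf : ∀ x y, |f x - f y| ≤ ∑ j, |x j - y j|)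
    (y : Fin n → ℝ) : LipschitzWith 1 fun x => f (Fin.cons x y) :=
  LipschitzWith.of_dist_le_mul fun x x' => by
    simpa [Real.dist_eq, Fin.sum_univ_succ] using hf (Fin.cons x y) (Fin.cons x' y)

lemma abs_integral_cons_sub_integral_cons_le {ν : Measure ℝ} [IsProbabilityMeasure ν]
    {a b : ℝ} (hν : ∀ᵐ x ∂ν, x ∈ Set.Icc a (a + b))
    (hf : ∀ x y, |f x - f y| ≤ ∑ j, |x j - y j|) (y y' : Fin n → ℝ) :
    |∫ x, f (Fin.cons x y) ∂ν - ∫ x, f (Fin.cons x y') ∂ν| ≤ ∑ j, |y j - y' j| := by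
  have hint (y : Fin n → ℝ) : Integrable (fun x => f (Fin.cons x y)) ν :=
    ((lipschitzWith_one_cons_left hf y).continuous.memLp_of_ae_mem_isCompact isCompact_Icc hν
      1).integrable le_rfl
  rw [← integral_sub (hint y) (hint y')]
  simpa using norm_integral_le_of_norm_le_const (μ := ν)
    (f := fun x => f (Fin.cons x y) - f (Fin.cons x y'))
    (ae_of_all _ fun x => by simpa [Fin.sum_univ_succ] using hf (Fin.cons x y) (Fin.cons x y'))

end Slices

lemma mgf_sub_integral_pi_le {n : ℕ} (μ : Fin n → Measure ℝ) [∀ j, IsProbabilityMeasure (μ j)]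
    {a : Fin n → ℝ} {b : ℝ} (hμ : ∀ j, ∀ᵐ x ∂μ j, x ∈ Set.Icc (a j) (a j + b))
    {f : (Fin n → ℝ) → ℝ} (hf : ∀ x y, |f x - f y| ≤ ∑ j, |x j - y j|) {t : ℝ} (ht : 0 ≤ t)
    (htb : t * b < 3) :
    mgf (fun x => f x - ∫ y, f y ∂Measure.pi μ) (Measure.pi μ) t ≤
      exp (t ^ 2 * (∑ j, variance id (μ j)) / (2 * (1 - t * b / 3))) := by
  induction n with
  | zero =>
    have hconst (x : Fin 0 → ℝ) : f x = f 0 := congrArg f (Subsingleton.elim x 0)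
    simp [mgf, hconst]
  | succ n ih =>
    set g : (Fin n → ℝ) → ℝ := fun y => ∫ x, f (Fin.cons x y) ∂μ 0
    have hg := abs_integral_cons_sub_integral_cons_le (hμ 0) hf
    have hfc := continuous_of_abs_sub_le_sum hf
    have hgc := continuous_of_abs_sub_le_sum hg
    set m := ∫ x, f x ∂Measure.pi μ
    have hm : ∫ y, g y ∂Measure.pi (fun j => μ j.succ) = m :=
      (integral_pi_fin_succ μ (hfc.integrable_pi_of_ae_mem_Icc hμ)).symm
    set K := exp (t ^ 2 * variance id (μ 0) / (2 * (1 - t * b / 3)))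
    calc mgf (fun x => f x - m) (Measure.pi μ) t
        = ∫ y, ∫ x, exp (t * (f (Fin.cons x y) - m)) ∂μ 0 ∂Measure.pi (fun j => μ j.succ) :=
          integral_pi_fin_succ μ (Continuous.integrable_pi_of_ae_mem_Icc hμ (by fun_prop))
      _ = ∫ y, exp (t * (g y - m)) * mgf (fun x => f (Fin.cons x y) - g y) (μ 0) t
            ∂Measure.pi (fun j => μ j.succ) := by
          refine integral_congr_ae (ae_of_all _ fun y => ?_)
          dsimp only [mgf]
          rw [← integral_const_mul]
          refine integral_congr_ae (ae_of_all _ fun x => ?_)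
          dsimp only
          rw [← exp_add]
          congr 1
          ring
      _ ≤ ∫ y, exp (t * (g y - m)) * K ∂Measure.pi (fun j => μ j.succ) :=
          integral_mono_of_nonneg (ae_of_all _ fun y => mul_nonneg (exp_pos _).le mgf_nonneg)
            (((by fun_prop : Continuous fun y => exp (t * (g y - m))).integrable_pi_of_ae_mem_Icc
              fun j => hμ j.succ).mul_const K)
            (ae_of_all _ fun y => mul_le_mul_of_nonneg_left (mgf_sub_integral_le_of_lipschitzWith
              (hμ 0) (lipschitzWith_one_cons_left hf y) ht htb) (exp_pos _).le)
      _ = mgf (fun y => g y - m) (Measure.pi (fun j => μ j.succ)) t * K := integral_mul_const _ _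
      _ ≤ exp (t ^ 2 * (∑ j : Fin n, variance id (μ j.succ)) / (2 * (1 - t * b / 3))) * K := by
          gcongr
          rw [← hm]
          exact ih (fun j => μ j.succ) (fun j => hμ j.succ) hg
      _ = exp (t ^ 2 * (∑ j, variance id (μ j)) / (2 * (1 - t * b / 3))) := by
          rw [← exp_add, Fin.sum_univ_succ]
          congr 1
          ring

lemma pi_measureReal_sub_integral_ge_le_of_pos {n : ℕ} (μ : Fin n → Measure ℝ)
    [∀ j, IsProbabilityMeasure (μ j)] {a : Fin n → ℝ} {b : ℝ}
    (hμ : ∀ j, ∀ᵐ x ∂μ j, x ∈ Set.Icc (a j) (a j + b)) {f : (Fin n → ℝ) → ℝ}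
    (hf : ∀ x y, |f x - f y| ≤ ∑ j, |x j - y j|) {u V : ℝ} (hV : 0 < V)
    (hVar : ∑ j, variance id (μ j) ≤ V) (hw : 0 < 2 * V + 2 / 3 * b * u) (hu : 0 < u) :
    (Measure.pi μ).real {x | u ≤ f x - ∫ y, f y ∂Measure.pi μ} ≤
      exp (-(u ^ 2) / (2 * V + 2 / 3 * b * u)) := by
  obtain ⟨w, hw_def⟩ : ∃ w, w = V + b * u / 3 := ⟨_, rfl⟩
  have hw0 : 0 < w := by linarith
  -- with this `t` the Chernoff exponent `t² V / (2 (1 - t b / 3)) - t u` equals `-u² / (2 w)`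
  set t := u / w with ht_def
  have ht : 0 ≤ t := by positivity
  have h1 : 1 - t * b / 3 = V / w := by
    rw [ht_def]; field_simp; linarith
  have htb : t * b < 3 := by
    have : 0 < V / w := by positivity
    linarith
  have hD : 0 < 2 * (1 - t * b / 3) := by linarith
  have hfc := continuous_of_abs_sub_le_sum hf
  calc _ ≤ exp (-t * u) * mgf (fun x => f x - ∫ y, f y ∂Measure.pi μ) (Measure.pi μ) t :=
        measure_ge_le_exp_mul_mgf u ht (Continuous.integrable_pi_of_ae_mem_Icc hμ (by fun_prop))
    _ ≤ exp (-t * u) * exp (t ^ 2 * V / (2 * (1 - t * b / 3))) := by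
        gcongr
        exact (mgf_sub_integral_pi_le μ hμ hf ht htb).trans (by gcongr)
    _ = exp (-(u ^ 2) / (2 * V + 2 / 3 * b * u)) := by
        rw [← exp_add, h1, show 2 * V + 2 / 3 * b * u = 2 * w by linarith, ht_def]
        congr 1
        field_simp
        ring

lemma pi_measureReal_sub_integral_ge_le {n : ℕ} (μ : Fin n → Measure ℝ)
    [∀ j, IsProbabilityMeasure (μ j)] {a : Fin n → ℝ} {b : ℝ}
    (hμ : ∀ j, ∀ᵐ x ∂μ j, x ∈ Set.Icc (a j) (a j + b)) {f : (Fin n → ℝ) → ℝ}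
    (hf : ∀ x y, |f x - f y| ≤ ∑ j, |x j - y j|) {u v : ℝ}
    (hv : ∑ j, variance id (μ j) ≤ v) (hw : 0 < 2 * v + 2 / 3 * b * u) (hu : 0 < u) :
    (Measure.pi μ).real {x | u ≤ f x - ∫ y, f y ∂Measure.pi μ} ≤
      exp (-(u ^ 2) / (2 * v + 2 / 3 * b * u)) := by
  have hv0 : 0 ≤ v := (Finset.sum_nonneg fun j _ => variance_nonneg _ _).trans hv
  have hcont : ContinuousAt (fun V => exp (-(u ^ 2) / (2 * V + 2 / 3 * b * u))) v := by
    fun_prop (disch := exact hw.ne')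
  -- the Chernoff bound needs `0 < V`, so `v = 0` is reached as a limit
  refine ge_of_tendsto (hcont.tendsto.mono_left (nhdsWithin_le_nhds (s := Set.Ioi v))) ?_
  filter_upwards [self_mem_nhdsWithin] with V (hV : v < V)
  exact pi_measureReal_sub_integral_ge_le_of_pos μ hμ hf (by linarith) (hv.trans hV.le)
    (by linarith) hu

lemma pi_measureReal_abs_sub_integral_ge_le {n : ℕ} (μ : Fin n → Measure ℝ)
    [∀ j, IsProbabilityMeasure (μ j)] {a : Fin n → ℝ} {b : ℝ}
    (hμ : ∀ j, ∀ᵐ x ∂μ j, x ∈ Set.Icc (a j) (a j + b)) {f : (Fin n → ℝ) → ℝ}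
    (hf : ∀ x y, |f x - f y| ≤ ∑ j, |x j - y j|) {u v : ℝ}
    (hv : ∑ j, variance id (μ j) ≤ v) (hu : 0 < u) :
    (Measure.pi μ).real {x | u ≤ |f x - ∫ y, f y ∂Measure.pi μ|} ≤
      2 * exp (-(u ^ 2) / (2 * v + 2 / 3 * b * u)) := by
  rcases le_or_gt (2 * v + 2 / 3 * b * u) 0 with hw | hw
  · have : 1 ≤ exp (-(u ^ 2) / (2 * v + 2 / 3 * b * u)) :=
      one_le_exp (div_nonneg_of_nonpos (neg_nonpos.2 (sq_nonneg u)) hw)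
    linarith [measureReal_le_one (μ := Measure.pi μ)
      (s := {x | u ≤ |f x - ∫ y, f y ∂Measure.pi μ|})]
  have hf' (x y : Fin n → ℝ) : |-f x - -f y| ≤ ∑ j, |x j - y j| := by
    rw [neg_sub_neg, abs_sub_comm]; exact hf x y
  have hupper := pi_measureReal_sub_integral_ge_le μ hμ hf hv hw hu
  have hlower := pi_measureReal_sub_integral_ge_le μ hμ hf' hv hw hu
  rw [integral_neg] at hlower
  calc (Measure.pi μ).real {x | u ≤ |f x - ∫ y, f y ∂Measure.pi μ|}
      ≤ (Measure.pi μ).real ({x | u ≤ f x - ∫ y, f y ∂Measure.pi μ} ∪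
        {x | u ≤ -f x - -∫ y, f y ∂Measure.pi μ}) :=
        measureReal_mono fun x hx => by
          rcases le_abs.1 (show u ≤ |f x - ∫ y, f y ∂Measure.pi μ| from hx) with h | h
          · exact Or.inl h
          · exact Or.inr (show u ≤ -f x - -∫ y, f y ∂Measure.pi μ by linarith)
    _ ≤ _ := measureReal_union_le _ _
    _ ≤ 2 * exp (-(u ^ 2) / (2 * v + 2 / 3 * b * u)) := by linarith

theorem stmt_6_general {Ω : Type*} [MeasurableSpace Ω] (P : Measure Ω) [IsProbabilityMeasure P]
    (n : ℕ) (Z : Fin n → Ω → ℝ) (hZmeas : ∀ j, Measurable (Z j))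
    (hindep : iIndepFun Z P)
    (σ : Fin n → ℝ) (hvar : ∀ j, variance (Z j) P ≤ (σ j) ^ 2)
    (b : ℝ) (hrange : ∀ j, ∃ a : ℝ, ∀ᵐ ω ∂P, Z j ω ∈ Set.Icc a (a + b))
    (f : (Fin n → ℝ) → ℝ)
    (hLip : ∀ x y : Fin n → ℝ, |f x - f y| ≤ ∑ j, |x j - y j|)
    (v : ℝ) (hv : v = ∑ j, (σ j) ^ 2) (u : ℝ) (hu : 0 < u) :
    (P {ω | u ≤ |f (fun j => Z j ω) - ∫ ω', f (fun j => Z j ω') ∂P|}).toReal ≤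
      2 * Real.exp (-(u ^ 2) / (2 * v + 2 / 3 * b * u)) := by
  choose a ha using hrange
  have hZ (j : Fin n) : AEMeasurable (Z j) P := (hZmeas j).aemeasurable
  have (j : Fin n) : IsProbabilityMeasure (P.map (Z j)) := Measure.isProbabilityMeasure_map (hZ j)
  have hZvec : Measurable fun ω j => Z j ω := measurable_pi_lambda _ hZmeas
  have hlaw : P.map (fun ω j => Z j ω) = Measure.pi fun j => P.map (Z j) :=
    hindep.map_fun_eq_pi_map hZ
  have hfc := continuous_of_abs_sub_le_sum hLip
  have hmean : ∫ ω, f (fun j => Z j ω) ∂P = ∫ x, f x ∂Measure.pi fun j => P.map (Z j) := by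
    rw [← hlaw, integral_map hZvec.aemeasurable hfc.aestronglyMeasurable]
  have hsum : ∑ j, variance id (P.map (Z j)) ≤ v :=
    hv ▸ Finset.sum_le_sum fun j _ => (variance_id_map (hZ j)).trans_le (hvar j)
  calc (P {ω | u ≤ |f (fun j => Z j ω) - ∫ ω', f (fun j => Z j ω') ∂P|}).toReal
      = (Measure.pi fun j => P.map (Z j)).real
          {x | u ≤ |f x - ∫ y, f y ∂Measure.pi fun j => P.map (Z j)|} := by
        rw [hmean, ← hlaw, map_measureReal_apply hZvec
          (measurableSet_le measurable_const (by fun_prop))]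
        rfl
    _ ≤ _ := pi_measureReal_abs_sub_integral_ge_le _
        (fun j => (ae_map_iff (hZ j) measurableSet_Icc).2 (ha j)) hLip hsum hu

/-- Bernstein's inequality for 1-Lipschitz (w.r.t. the ℓ¹ norm) functions of independent
random variables with bounded range and bounded variances. -/
theorem stmt_6 {Ω : Type*} [MeasurableSpace Ω] (P : Measure Ω) [IsProbabilityMeasure P]
    (n : ℕ) (Z : Fin n → Ω → ℝ) (hZmeas : ∀ j, Measurable (Z j))
    (hindep : iIndepFun Z P)
    (σ : Fin n → ℝ) (hvar : ∀ j, variance (Z j) P ≤ (σ j) ^ 2)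
    (b : ℝ) (hrange : ∀ j, ∃ a : ℝ, ∀ᵐ ω ∂P, Z j ω ∈ Set.Icc a (a + b))
    (f : (Fin n → ℝ) → ℝ) (hfmeas : Measurable f)
    (hLip : ∀ x y : Fin n → ℝ, |f x - f y| ≤ ∑ j, |x j - y j|)
    (v : ℝ) (hv : v = ∑ j, (σ j) ^ 2) (u : ℝ) (hu : 0 < u) :
    (P {ω | u ≤ |f (fun j => Z j ω) - ∫ ω', f (fun j => Z j ω') ∂P|}).toReal ≤
      2 * Real.exp (-(u ^ 2) / (2 * v + 2 / 3 * b * u)) :=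
  stmt_6_general P n Z hZmeas hindep σ hvar b hrange f hLip v hv u hu
end
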